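/- arXiv:0809.1840 — 3 statements merged into one kernel-verified Lean document; each statement's English description precedes it below -/
import Mathlib

section
/- Let d : Ω × Ω → ℝ be a C⁴ unit deviance with ∂_y d(μ;μ) = 0 and ∂³_{yyy} d at the diagonal point equal to 0 for the relevant center points. Fix μ₀, μ ∈ ℝ and suppose x : (0,∞) → ℝ satisfies σ²(x(σ)−μ)⁴ → β ∈ [0,∞) and σ³(x(σ)−μ)⁵ → 0 as σ → 0. Then (2σ²)⁻¹ d(μ₀+σx(σ); μ₀+σμ) − (x(σ)−μ)²·∂²_{yy}d(μ₀+σμ;μ₀+σμ)/4 converges to (β/48)·∂⁴_{yyyy} d(μ₀;μ₀) as σ → 0. -/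
open Filter Topology

open Set

lemma iterDW_open_eq {g : ℝ → ℝ} {s : Set ℝ} (hs : IsOpen s) {k : ℕ} {x : ℝ} (hx : x ∈ s) :
    iteratedDerivWithin k g s x = iteratedDeriv k g x := by
  rw [iteratedDerivWithin_eq_iteratedFDerivWithin, iteratedFDerivWithin_of_isOpen k hs hx,
    iteratedDeriv_eq_iteratedFDeriv]

lemma iterDW_eq {g : ℝ → ℝ} {s : Set ℝ} (hs : IsOpen s) (hg : ContDiffOn ℝ 4 g s)
    {a b : ℝ} (hab : a < b) (hsub : Set.Icc a b ⊆ s) {k : ℕ} (hk : (k : WithTop ℕ∞) ≤ 4)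
    {x : ℝ} (hx : x ∈ Set.Icc a b) :
    iteratedDerivWithin k g (Set.Icc a b) x = iteratedDeriv k g x := by
  have H : HasFTaylorSeriesUpToOn 4 g (ftaylorSeriesWithin ℝ g s) s :=
    hg.ftaylorSeriesWithin hs.uniqueDiffOn
  have H2 := (H.mono hsub).eq_iteratedFDerivWithin_of_uniqueDiffOn hk
    (uniqueDiffOn_Icc hab) hx
  rw [iteratedDerivWithin_eq_iteratedFDerivWithin, ← H2,
    show ftaylorSeriesWithin ℝ g s x k = iteratedFDerivWithin ℝ k g s x from rfl,
    iteratedFDerivWithin_of_isOpen k hs (hsub hx), iteratedDeriv_eq_iteratedFDeriv]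

lemma taylor4_lt {g : ℝ → ℝ} {s : Set ℝ} (hs : IsOpen s) (hg : ContDiffOn ℝ 4 g s)
    {a b : ℝ} (hab : a < b) (hsub : Set.Icc a b ⊆ s) :
    ∃ ξ ∈ Set.Icc a b, g b = g a + deriv g a * (b - a)
      + iteratedDeriv 2 g a * (b - a) ^ 2 / 2 + iteratedDeriv 3 g a * (b - a) ^ 3 / 6
      + iteratedDeriv 4 g ξ * (b - a) ^ 4 / 24 := by
  have hd := hg.differentiableOn_iteratedDerivWithin (m := 3) (by norm_num) hs.uniqueDiffOn
  have hEq : ∀ y ∈ Set.Icc a b,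
      iteratedDerivWithin 3 g (Set.Icc a b) y = iteratedDerivWithin 3 g s y := fun y hy =>
    (iterDW_eq hs hg hab hsub (by norm_num) hy).trans (iterDW_open_eq hs (hsub hy)).symm
  have hdiff : DifferentiableOn ℝ (iteratedDerivWithin 3 g (Set.Icc a b)) (Set.Ioo a b) := by
    intro x hx
    have hx' : x ∈ Set.Icc a b := Set.Ioo_subset_Icc_self hx
    exact ((hd x (hsub hx')).differentiableAt (hs.mem_nhds (hsub hx'))).differentiableWithinAt.congr
      (fun y hy => hEq y (Set.Ioo_subset_Icc_self hy)) (hEq x hx')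
  obtain ⟨ξ, hξ, hT⟩ := taylor_mean_remainder_lagrange (f := g) (n := 3) hab.ne
    ((hg.of_le (by norm_num)).mono (by rwa [Set.uIcc_of_le hab.le]))
    (by rwa [Set.uIcc_of_le hab.le, Set.uIoo_of_le hab.le])
  rw [Set.uIoo_of_le hab.le] at hξ
  rw [Set.uIcc_of_le hab.le] at hT
  refine ⟨ξ, Set.Ioo_subset_Icc_self hξ, ?_⟩
  have ha : a ∈ Set.Icc a b := Set.left_mem_Icc.2 hab.le
  rw [taylor_within_apply] at hT
  have e0 := iterDW_eq hs hg hab hsub (k := 0) (by norm_num) ha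
  have e1 := iterDW_eq hs hg hab hsub (k := 1) (by norm_num) ha
  have e2 := iterDW_eq hs hg hab hsub (k := 2) (by norm_num) ha
  have e3 := iterDW_eq hs hg hab hsub (k := 3) (by norm_num) ha
  have e4 := iterDW_eq hs hg hab hsub (k := 4) (by norm_num) (Set.Ioo_subset_Icc_self hξ)
  simp only [Finset.sum_range_succ, Finset.sum_range_zero, e0, e1, e2, e3, e4,
    iteratedDeriv_zero, iteratedDeriv_one, smul_eq_mul, Nat.factorial] at hT
  norm_num at hT
  linarith

lemma taylor4 {g : ℝ → ℝ} {s : Set ℝ} (hs : IsOpen s) (hg : ContDiffOn ℝ 4 g s)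
    {a b : ℝ} (hsub : Set.uIcc a b ⊆ s) :
    ∃ ξ ∈ Set.uIcc a b, g b = g a + deriv g a * (b - a)
      + iteratedDeriv 2 g a * (b - a) ^ 2 / 2 + iteratedDeriv 3 g a * (b - a) ^ 3 / 6
      + iteratedDeriv 4 g ξ * (b - a) ^ 4 / 24 := by
  rcases lt_trichotomy a b with hab | rfl | hab
  · rw [Set.uIcc_of_le hab.le] at hsub ⊢
    exact taylor4_lt hs hg hab hsub
  · exact ⟨a, Set.left_mem_uIcc, by simp⟩
  · rw [Set.uIcc_of_ge hab.le] at hsub ⊢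
    set G : ℝ → ℝ := fun z => g (2 * a + -z) with hG
    have hrefl : Continuous fun z : ℝ => 2 * a + -z := by continuity
    have hs' : IsOpen ((fun z : ℝ => 2 * a + -z) ⁻¹' s) := hs.preimage hrefl
    have hG4 : ContDiffOn ℝ 4 G ((fun z : ℝ => 2 * a + -z) ⁻¹' s) :=
      hg.comp ((contDiff_const.add contDiff_neg).contDiffOn) (Set.mapsTo_preimage _ _)
    have hab' : a < 2 * a - b := by linarith
    have hsub' : Set.Icc a (2 * a - b) ⊆ (fun z : ℝ => 2 * a + -z) ⁻¹' s := by
      intro z hz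
      simp only [Set.mem_preimage]
      exact hsub ⟨by simp at hz ⊢; linarith [hz.2], by simp at hz ⊢; linarith [hz.1]⟩
    obtain ⟨ξ', hξ', hT⟩ := taylor4_lt hs' hG4 hab' hsub'
    have hGd : ∀ (k : ℕ) (z : ℝ),
        iteratedDeriv k G z = (-1 : ℝ) ^ k * iteratedDeriv k g (2 * a + -z) := by
      intro k z
      have h1 := iteratedDeriv_comp_neg (𝕜 := ℝ) (F := ℝ) k (fun w => g (2 * a + w)) z
      rw [iteratedDeriv_comp_const_add] at h1
      simpa [smul_eq_mul] using h1
    refine ⟨2 * a + -ξ', ?_, ?_⟩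
    · simp only [Set.mem_Icc] at hξ' ⊢
      exact ⟨by linarith [hξ'.2], by linarith [hξ'.1]⟩
    · have hb : G (2 * a - b) = g b := by
        show g (2 * a + -(2 * a - b)) = g b
        norm_num
      have h0 : G a = g a := by
        show g (2 * a + -a) = g a
        rw [show (2 : ℝ) * a + -a = a by ring]
      have h1 : deriv G a = -deriv g a := by
        have h := hGd 1 a
        rw [show (2 : ℝ) * a + -a = a by ring] at h
        simpa [iteratedDeriv_one] using h
      have h2 := hGd 2 a
      have h3 := hGd 3 a
      have h4 := hGd 4 ξ'
      rw [show (2 : ℝ) * a + -a = a by ring] at h2 h3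
      rw [hb, h0, h1, h2, h3, h4] at hT
      linear_combination hT

noncomputable def pd (f : ℝ × ℝ → ℝ) : ℝ × ℝ → ℝ := fun p => fderiv ℝ f p (1, 0)

lemma pd_contDiffOn {S : Set (ℝ × ℝ)} {f : ℝ × ℝ → ℝ} {n : ℕ} (hS : IsOpen S)
    (hf : ContDiffOn ℝ (n + 1 : ℕ) f S) : ContDiffOn ℝ (n : ℕ) (pd f) S := by
  have h : ContDiffOn ℝ (n : ℕ) (fderiv ℝ f) S :=
    hf.fderiv_of_isOpen hS (by push_cast; rfl)
  exact (ContinuousLinearMap.apply ℝ ℝ ((1 : ℝ), (0 : ℝ))).contDiff.comp_contDiffOn h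

lemma pd_deriv {S : Set (ℝ × ℝ)} {f : ℝ × ℝ → ℝ} {n : ℕ} (hS : IsOpen S)
    (hf : ContDiffOn ℝ (n + 1 : ℕ) f S) {y t : ℝ} (h : (y, t) ∈ S) :
    deriv (fun y' => f (y', t)) y = pd f (y, t) := by
  have hdiff : DifferentiableAt ℝ f (y, t) :=
    (hf.differentiableOn (by simp)).differentiableAt
      (hS.mem_nhds h)
  have hline : HasDerivAt (fun y' : ℝ => (y', t)) ((1 : ℝ), (0 : ℝ)) y :=
    (hasDerivAt_id y).prodMk (hasDerivAt_const y t)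
  exact (hdiff.hasFDerivAt.comp_hasDerivAt y hline).deriv

lemma partial_iteratedDeriv {S : Set (ℝ × ℝ)} (hS : IsOpen S) :
    ∀ (k n : ℕ) (f : ℝ × ℝ → ℝ), ContDiffOn ℝ (k + n : ℕ) f S →
      ∀ (y t : ℝ), (y, t) ∈ S →
        iteratedDeriv k (fun y' => f (y', t)) y = pd^[k] f (y, t) := by
  intro k
  induction k with
  | zero => intro n f hf y t h; simp
  | succ k IH =>
    intro n f hf y t h
    have hf' : ContDiffOn ℝ ((k + n) + 1 : ℕ) f S := by
      convert hf using 2; omega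
    rw [iteratedDeriv_succ']
    have hU : IsOpen {y' : ℝ | (y', t) ∈ S} :=
      hS.preimage (continuous_id.prodMk continuous_const)
    have hev : (fun y' => deriv (fun y'' => f (y'', t)) y') =ᶠ[nhds y]
        (fun y' => pd f (y', t)) := by
      filter_upwards [hU.mem_nhds h] with y' hy'
      exact pd_deriv hS hf' hy'
    rw [Filter.EventuallyEq.iteratedDeriv_eq k hev, IH n (pd f) (pd_contDiffOn hS hf') y t h,
      ← Function.iterate_succ_apply]

lemma pd_iterate_contDiffOn {S : Set (ℝ × ℝ)} (hS : IsOpen S) :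
    ∀ (k n : ℕ) (f : ℝ × ℝ → ℝ), ContDiffOn ℝ (k + n : ℕ) f S →
      ContDiffOn ℝ (n : ℕ) (pd^[k] f) S := by
  intro k
  induction k with
  | zero => intro n f hf; simpa using hf
  | succ k IH =>
    intro n f hf
    have hf' : ContDiffOn ℝ ((k + n) + 1 : ℕ) f S := by
      convert hf using 2; omega
    rw [Function.iterate_succ_apply]
    exact IH n (pd f) (pd_contDiffOn hS hf')

/-- Taylor-expansion limit for a C⁴ unit deviance with vanishing
third derivative along the relevant center points: if
`σ²(x(σ)−μ)⁴ → β` and `σ³(x(σ)−μ)⁵ → 0` as `σ → 0⁺`, then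
`(2σ²)⁻¹ d(μ₀+σx(σ); μ₀+σμ) − (x(σ)−μ)²·∂²_{yy}d(μ₀+σμ;μ₀+σμ)/4`
converges to `(β/48)·∂⁴_{yyyy} d(μ₀;μ₀)`. -/
theorem taylor_limit_fourth_order
    (Ω : Set ℝ) (hΩopen : IsOpen Ω) (μ₀ : ℝ) (hμ₀ : μ₀ ∈ Ω)
    (d : ℝ → ℝ → ℝ)
    (hC4 : ContDiffOn ℝ 4 (fun p : ℝ × ℝ => d p.1 p.2) (Ω ×ˢ Ω))
    (hdiag : ∀ t ∈ Ω, d t t = 0)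
    (hd1 : ∀ t ∈ Ω, deriv (fun y => d y t) t = 0)
    (μ : ℝ)
    (hd3 : ∀ᶠ σ in 𝓝[>] (0 : ℝ),
      iteratedDeriv 3 (fun y => d y (μ₀ + σ * μ)) (μ₀ + σ * μ) = 0)
    (x : ℝ → ℝ)
    (hmem : ∀ᶠ σ in 𝓝[>] (0 : ℝ),
      μ₀ + σ * μ ∈ Ω ∧ μ₀ + σ * x σ ∈ Ω)
    (β : ℝ) (hβ : 0 ≤ β)
    (hx4 : Tendsto (fun σ => σ ^ 2 * (x σ - μ) ^ 4) (𝓝[>] (0 : ℝ)) (𝓝 β))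
    (hx5 : Tendsto (fun σ => σ ^ 3 * (x σ - μ) ^ 5) (𝓝[>] (0 : ℝ)) (𝓝 0)) :
    Tendsto
      (fun σ =>
        d (μ₀ + σ * x σ) (μ₀ + σ * μ) / (2 * σ ^ 2)
          - (x σ - μ) ^ 2
              * iteratedDeriv 2 (fun y => d y (μ₀ + σ * μ)) (μ₀ + σ * μ) / 4)
      (𝓝[>] (0 : ℝ))
      (𝓝 (β / 48 * iteratedDeriv 4 (fun y => d y μ₀) μ₀)) := by
  classical
  set f : ℝ × ℝ → ℝ := fun p => d p.1 p.2 with hf_def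
  set S : Set (ℝ × ℝ) := Ω ×ˢ Ω with hS_def
  have hSopen : IsOpen S := hΩopen.prod hΩopen
  have hC4' : ContDiffOn ℝ ((4 : ℕ) : WithTop ℕ∞) f S := by exact_mod_cast hC4
  set F4 : ℝ × ℝ → ℝ := pd^[4] f with hF4_def
  -- notation for moving points
  set t : ℝ → ℝ := fun σ => μ₀ + σ * μ with ht_def
  set yy : ℝ → ℝ := fun σ => μ₀ + σ * x σ with hyy_def
  -- ε-ball inside Ω
  obtain ⟨ε, hε, hball⟩ := Metric.isOpen_iff.mp hΩopen μ₀ hμ₀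
  -- limits of t, yy
  have ht_lim : Tendsto t (𝓝[>] (0 : ℝ)) (𝓝 μ₀) := by
    have : Continuous fun σ : ℝ => μ₀ + σ * μ := by continuity
    have h := this.tendsto 0
    simp only [zero_mul, add_zero] at h
    exact h.mono_left nhdsWithin_le_nhds
  have hu4 : Tendsto (fun σ => (σ * (x σ - μ)) ^ 4) (𝓝[>] (0 : ℝ)) (𝓝 0) := by
    have hσ2 : Tendsto (fun σ : ℝ => σ ^ 2) (𝓝[>] (0 : ℝ)) (𝓝 0) := by
      have : Continuous fun σ : ℝ => σ ^ 2 := by continuity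
      have h := this.tendsto 0
      simp only [ne_eq, OfNat.ofNat_ne_zero, not_false_eq_true, zero_pow] at h
      exact h.mono_left nhdsWithin_le_nhds
    have := hσ2.mul hx4
    simp only [zero_mul] at this
    exact this.congr (by intro σ; ring)
  have hu_lim : Tendsto (fun σ => σ * (x σ - μ)) (𝓝[>] (0 : ℝ)) (𝓝 0) := by
    have h2 : Tendsto (fun σ => (σ * (x σ - μ)) ^ 2) (𝓝[>] (0 : ℝ)) (𝓝 0) := by
      have h := (Real.continuous_sqrt.tendsto 0).comp hu4
      simp only [Function.comp_def, Real.sqrt_zero] at h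
      refine h.congr fun σ => ?_
      rw [show (σ * (x σ - μ)) ^ 4 = ((σ * (x σ - μ)) ^ 2) ^ 2 by ring,
        Real.sqrt_sq (sq_nonneg _)]
    have habs : Tendsto (fun σ => |σ * (x σ - μ)|) (𝓝[>] (0 : ℝ)) (𝓝 0) := by
      have h := (Real.continuous_sqrt.tendsto 0).comp h2
      simp only [Function.comp_def, Real.sqrt_zero] at h
      refine h.congr fun σ => ?_
      rw [Real.sqrt_sq_eq_abs]
    exact (tendsto_zero_iff_abs_tendsto_zero _).mpr habs
  have hy_lim : Tendsto yy (𝓝[>] (0 : ℝ)) (𝓝 μ₀) := by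
    have h := ht_lim.add hu_lim
    simp only [add_zero] at h
    exact h.congr (by intro σ; simp only [ht_def, hyy_def]; ring)
  -- the key existence predicate
  set E : ℝ → ℝ := fun σ =>
    d (μ₀ + σ * x σ) (μ₀ + σ * μ) / (2 * σ ^ 2)
      - (x σ - μ) ^ 2 * iteratedDeriv 2 (fun y => d y (μ₀ + σ * μ)) (μ₀ + σ * μ) / 4
    with hE_def
  set Q : ℝ → Prop := fun σ => ∃ c ∈ uIcc (t σ) (yy σ),
    E σ = F4 (c, t σ) * (σ ^ 2 * (x σ - μ) ^ 4) / 48 with hQ_def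
  have hQ : ∀ᶠ σ in 𝓝[>] (0 : ℝ), Q σ := by
    have hball_t : ∀ᶠ σ in 𝓝[>] (0 : ℝ), t σ ∈ Metric.ball μ₀ ε :=
      ht_lim (Metric.ball_mem_nhds μ₀ hε)
    have hball_y : ∀ᶠ σ in 𝓝[>] (0 : ℝ), yy σ ∈ Metric.ball μ₀ ε :=
      hy_lim (Metric.ball_mem_nhds μ₀ hε)
    filter_upwards [hmem, hd3, hball_t, hball_y, self_mem_nhdsWithin] with σ hmemσ hd3σ hbt hby hσpos
    have hσ : (σ : ℝ) ≠ 0 := ne_of_gt hσpos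
    have htΩ : t σ ∈ Ω := hmemσ.1
    have hg4 : ContDiffOn ℝ 4 (fun y => d y (t σ)) Ω := by
      have : (fun y => d y (t σ)) = f ∘ (fun y : ℝ => (y, t σ)) := rfl
      rw [this]
      exact hC4.comp (contDiff_id.prodMk contDiff_const).contDiffOn
        (fun y hy => Set.mk_mem_prod hy htΩ)
    have hsub : uIcc (t σ) (yy σ) ⊆ Ω := by
      intro z hz
      exact hball ((convex_ball μ₀ ε).ordConnected.uIcc_subset hbt hby hz)
    obtain ⟨c, hc, hTay⟩ := taylor4 hΩopen hg4 hsub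
    have hcΩ : c ∈ Ω := hsub hc
    have hF4c : iteratedDeriv 4 (fun y => d y (t σ)) c = F4 (c, t σ) := by
      have := partial_iteratedDeriv hSopen 4 0 f (by simpa using hC4') c (t σ)
        (Set.mk_mem_prod hcΩ htΩ)
      simpa [hF4_def, hf_def] using this
    refine ⟨c, hc, ?_⟩
    have h0 : d (t σ) (t σ) = 0 := hdiag _ htΩ
    have h1 : deriv (fun y => d y (t σ)) (t σ) = 0 := hd1 _ htΩ
    have h3 : iteratedDeriv 3 (fun y => d y (t σ)) (t σ) = 0 := hd3σ
    have hba : yy σ - t σ = σ * (x σ - μ) := by simp only [ht_def, hyy_def]; ring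
    rw [h0, h1, h3, hF4c, hba] at hTay
    have hd_eq : d (μ₀ + σ * x σ) (μ₀ + σ * μ) = d (yy σ) (t σ) := rfl
    simp only [hE_def, hd_eq, hTay]
    field_simp
    ring
  -- choose ξ
  set ξ : ℝ → ℝ := fun σ => if h : Q σ then h.choose else μ₀ with hξ_def
  have hξ_spec : ∀ᶠ σ in 𝓝[>] (0 : ℝ), ξ σ ∈ uIcc (t σ) (yy σ) ∧
      E σ = F4 (ξ σ, t σ) * (σ ^ 2 * (x σ - μ) ^ 4) / 48 := by
    filter_upwards [hQ] with σ hQσ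
    have : ξ σ = hQσ.choose := by simp only [hξ_def, dif_pos hQσ]
    rw [this]
    exact ⟨hQσ.choose_spec.1, hQσ.choose_spec.2⟩
  -- ξ → μ₀ by squeeze
  have hξ_lim : Tendsto ξ (𝓝[>] (0 : ℝ)) (𝓝 μ₀) := by
    have hmin : Tendsto (fun σ => min (t σ) (yy σ)) (𝓝[>] (0 : ℝ)) (𝓝 μ₀) := by
      have := ht_lim.min hy_lim; simpa using this
    have hmax : Tendsto (fun σ => max (t σ) (yy σ)) (𝓝[>] (0 : ℝ)) (𝓝 μ₀) := by
      have := ht_lim.max hy_lim; simpa using this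
    refine tendsto_of_tendsto_of_tendsto_of_le_of_le' hmin hmax ?_ ?_
    · filter_upwards [hξ_spec] with σ hσ
      rcases Set.mem_uIcc.mp hσ.1 with h | h
      · exact le_trans (min_le_left _ _) h.1
      · exact le_trans (min_le_right _ _) h.1
    · filter_upwards [hξ_spec] with σ hσ
      rcases Set.mem_uIcc.mp hσ.1 with h | h
      · exact le_trans h.2 (le_max_right _ _)
      · exact le_trans h.2 (le_max_left _ _)
  -- continuity of F4 at (μ₀, μ₀)
  have hF4cont : ContinuousOn F4 S := by
    have := pd_iterate_contDiffOn hSopen 4 0 f (by simpa using hC4')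
    exact this.continuousOn
  have hF4at : ContinuousAt F4 (μ₀, μ₀) :=
    hF4cont.continuousAt (hSopen.mem_nhds (Set.mk_mem_prod hμ₀ hμ₀))
  have hpair : Tendsto (fun σ => (ξ σ, t σ)) (𝓝[>] (0 : ℝ)) (𝓝 (μ₀, μ₀)) :=
    hξ_lim.prodMk_nhds ht_lim
  have hF4lim : Tendsto (fun σ => F4 (ξ σ, t σ)) (𝓝[>] (0 : ℝ)) (𝓝 (F4 (μ₀, μ₀))) :=
    hF4at.tendsto.comp hpair
  have hmain : Tendsto (fun σ => F4 (ξ σ, t σ) * (σ ^ 2 * (x σ - μ) ^ 4) / 48)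
      (𝓝[>] (0 : ℝ)) (𝓝 (F4 (μ₀, μ₀) * β / 48)) :=
    (hF4lim.mul hx4).div_const 48
  have hval : β / 48 * iteratedDeriv 4 (fun y => d y μ₀) μ₀ = F4 (μ₀, μ₀) * β / 48 := by
    have := partial_iteratedDeriv hSopen 4 0 f (by simpa using hC4') μ₀ μ₀
      (Set.mk_mem_prod hμ₀ hμ₀)
    rw [show (fun y => d y μ₀) = (fun y' => f (y', μ₀)) from rfl, this]
    ring
  rw [hval]
  exact hmain.congr' (by filter_upwards [hξ_spec] with σ h; exact h.2.symm)
end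

section
/- For the Leipnik unit deviance d(y;μ) = log((1 − 2yμ + μ²)/(1 − y²)) on (−1,1) × (−1,1): d(y,y) = 0 for all y ∈ (−1,1), ∂²_{yy} d(μ;μ) = 2/(1−μ²), and ∂³_{yyy} d(μ;μ) = 12μ/(1−μ²)². -/
/-!
Near any `y` with `1 - 2yμ + μ² ≠ 0` and `y ≠ ±1`, the deviance `d(·;μ)` splits as
`log(-2μ y + 1 + μ²) - log(1 - y) - log(1 + y)`, a combination of logarithms of affine maps,
and `(d/dy)^(n+1) log(c y + d) = (-1)ⁿ n! c^(n+1) / (c y + d)^(n+1)`. At `y = μ` the first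
argument becomes `(1 - μ)(1 + μ)`, and the second and third derivatives collapse to the stated
closed forms.
-/

open Real Filter Topology
open scoped Nat

noncomputable def leipnikDeviance (y μ : ℝ) : ℝ :=
  log ((1 - 2 * y * μ + μ ^ 2) / (1 - y ^ 2))

/-- At `y = ±1` this holds through the junk values `0 / 0 = 0` and `log 0 = 0`. -/
theorem leipnikDeviance_self (y : ℝ) : leipnikDeviance y y = 0 := by
  rw [leipnikDeviance, show 1 - 2 * y * y + y ^ 2 = 1 - y ^ 2 by ring]
  rcases eq_or_ne (1 - y ^ 2) 0 with h | h <;> simp [h]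

theorem iteratedDeriv_succ_log_affine (n : ℕ) {c d x : ℝ} (hx : c * x + d ≠ 0) :
    iteratedDeriv (n + 1) (fun y => log (c * y + d)) x
      = (-1) ^ n * n ! * c ^ (n + 1) / (c * x + d) ^ (n + 1) := by
  have hderiv : deriv (fun y => log (c * y + d)) =ᶠ[𝓝 x] fun y => c * (c * y + d)⁻¹ := by
    filter_upwards [(by fun_prop : Continuous fun y => c * y + d).continuousAt.eventually_ne hx]
      with y hy
    rw [((((hasDerivAt_id' y).const_mul c).add_const d).log hy).deriv, mul_one, div_eq_mul_inv]
  rw [iteratedDeriv_succ', hderiv.iteratedDeriv_eq, iteratedDeriv_const_mul_field,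
    iteratedDeriv_eq_iterate, iter_deriv_inv_linear]
  simp only [show (-1 - n : ℤ) = -((n + 1 : ℕ) : ℤ) by push_cast; ring, zpow_neg, zpow_natCast]
  ring

theorem leipnikDeviance_eventuallyEq_log_affine {y μ : ℝ} (hN : 1 - 2 * y * μ + μ ^ 2 ≠ 0)
    (hy₁ : 1 - y ≠ 0) (hy₂ : 1 + y ≠ 0) :
    (fun z => leipnikDeviance z μ) =ᶠ[𝓝 y]
      fun z => log (-2 * μ * z + (1 + μ ^ 2)) - log (-1 * z + 1) - log (1 * z + 1) := by
  filter_upwards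
    [(by fun_prop : Continuous fun z => 1 - 2 * z * μ + μ ^ 2).continuousAt.eventually_ne hN,
      (by fun_prop : Continuous fun z : ℝ => 1 - z).continuousAt.eventually_ne hy₁,
      (by fun_prop : Continuous fun z : ℝ => 1 + z).continuousAt.eventually_ne hy₂]
    with z hN h₁ h₂
  rw [leipnikDeviance, show 1 - z ^ 2 = (1 - z) * (1 + z) by ring,
    log_div hN (mul_ne_zero h₁ h₂), log_mul h₁ h₂]
  ring_nf

theorem iteratedDeriv_succ_leipnikDeviance (n : ℕ) {y μ : ℝ} (hN : 1 - 2 * y * μ + μ ^ 2 ≠ 0)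
    (hy₁ : 1 - y ≠ 0) (hy₂ : 1 + y ≠ 0) :
    iteratedDeriv (n + 1) (fun z => leipnikDeviance z μ) y
      = (-1) ^ n * n ! * ((-2 * μ) ^ (n + 1) / (1 - 2 * y * μ + μ ^ 2) ^ (n + 1)
          - (-1) ^ (n + 1) / (1 - y) ^ (n + 1) - 1 / (1 + y) ^ (n + 1)) := by
  have hN' : -2 * μ * y + (1 + μ ^ 2) ≠ 0 := by convert hN using 1; ring
  have h₁ : -1 * y + 1 ≠ 0 := by convert hy₁ using 1; ring
  have h₂ : 1 * y + 1 ≠ 0 := by convert hy₂ using 1; ring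
  rw [(leipnikDeviance_eventuallyEq_log_affine hN hy₁ hy₂).iteratedDeriv_eq,
    iteratedDeriv_fun_sub, iteratedDeriv_fun_sub, iteratedDeriv_succ_log_affine n hN',
    iteratedDeriv_succ_log_affine n h₁, iteratedDeriv_succ_log_affine n h₂]
  · ring
  all_goals fun_prop (disch := assumption)

/-- For the Leipnik unit deviance
`d(y;μ) = log((1 − 2yμ + μ²)/(1 − y²))` on `(−1,1) × (−1,1)`: `d(y,y)=0`,
`∂²_{yy} d(μ;μ) = 2/(1−μ²)`, `∂³_{yyy} d(μ;μ) = 12μ/(1−μ²)²`. -/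
theorem leipnik_deviance_props :
    (∀ y : ℝ, y ∈ Set.Ioo (-1 : ℝ) 1 →
      Real.log ((1 - 2 * y * y + y ^ 2) / (1 - y ^ 2)) = 0) ∧
    (∀ μ : ℝ, μ ∈ Set.Ioo (-1 : ℝ) 1 →
      iteratedDeriv 2
        (fun y : ℝ => Real.log ((1 - 2 * y * μ + μ ^ 2) / (1 - y ^ 2))) μ
        = 2 / (1 - μ ^ 2) ∧
      iteratedDeriv 3
        (fun y : ℝ => Real.log ((1 - 2 * y * μ + μ ^ 2) / (1 - y ^ 2))) μ
        = 12 * μ / (1 - μ ^ 2) ^ 2) := by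
  refine ⟨fun y _ => leipnikDeviance_self y, fun μ ⟨hμ₁, hμ₂⟩ => ?_⟩
  have h₁ : 1 - μ ≠ 0 := by linarith
  have h₂ : 1 + μ ≠ 0 := by linarith
  have hfac : 1 - 2 * μ * μ + μ ^ 2 = (1 - μ) * (1 + μ) := by ring
  have hfac' : 1 - μ ^ 2 = (1 - μ) * (1 + μ) := by ring
  have hN : 1 - 2 * μ * μ + μ ^ 2 ≠ 0 := hfac ▸ mul_ne_zero h₁ h₂
  constructor
  · refine (iteratedDeriv_succ_leipnikDeviance 1 hN h₁ h₂).trans ?_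
    rw [hfac, hfac']
    field_simp
    ring
  · refine (iteratedDeriv_succ_leipnikDeviance 2 hN h₁ h₂).trans ?_
    rw [hfac, hfac']
    field_simp
    ring
end

section
/- Let d : Ω × Ω → ℝ be a C³ unit deviance with d(t,t)=0 and ∂_y d(t;t) = 0 for all t, and let V(t) = 2/∂²_{yy} d(t;t) > 0 be continuous at μ₀ ∈ Ω. Fix μ ∈ ℝ and suppose x : (0,∞) → ℝ satisfies σ(x(σ)−μ)³ → β ∈ [0,∞) and σ²(x(σ)−μ)⁴ → 0 as σ → 0. Then the quantity (x(σ)−μ)²/(2V(μ₀)) − (2σ²)⁻¹ d(μ₀+σx(σ); μ₀+σμ) converges to −(β/12)·∂³_{yyy} d(μ₀;μ₀) as σ → 0. -/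
/-!
Write `t = μ₀ + σμ` and `u = x(σ) − μ`. Since `d(t;t) = ∂_y d(t;t) = 0`, Taylor's theorem with
Lagrange remainder in the first variable gives
`d(t + σu; t) = ∂²_{yy} d(t;t) σ²u²/2 + ∂³_{yyy} d(ξ;t) σ³u³/6` with `ξ` between `t` and `t + σu`.
After dividing by `2σ²`, the quadratic term cancels `u²/(2V(μ₀))` up to
`σu² · (∂²_{yy} d(t;t) − ∂²_{yy} d(μ₀;μ₀))/σ / 4`: the difference quotient converges because
`t ↦ ∂²_{yy} d(t;t)` is differentiable, and `σu² → 0` because `(σu²)³ = σ (σu³)²`.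
The cubic term tends to `β ∂³_{yyy} d(μ₀;μ₀)/12` because `ξ → μ₀` and `∂³_{yyy} d` is continuous.
-/

open Filter Topology Set
open scoped Nat

section

variable {α : Type*} {l : Filter α}

theorem tendsto_zero_of_tendsto_pow {u : α → ℝ} {n : ℕ} (hn : n ≠ 0)
    (h : Tendsto (fun a => u a ^ n) l (𝓝 0)) : Tendsto u l (𝓝 0) := by
  rw [tendsto_zero_iff_abs_tendsto_zero]
  have hroot := (tendsto_zero_iff_abs_tendsto_zero _ |>.mp h).rpow_const
    (p := (n⁻¹ : ℝ)) (Or.inr (by positivity))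
  rw [Real.zero_rpow (by positivity)] at hroot
  refine hroot.congr fun a => ?_
  rw [Function.comp_apply, Function.comp_apply, abs_pow,
    Real.pow_rpow_inv_natCast (abs_nonneg _) hn]

theorem tendsto_mul_pow_of_tendsto_mul_pow {s u : α → ℝ} {β : ℝ} {j n : ℕ} (hjn : j < n)
    (hs : Tendsto s l (𝓝 0)) (h : Tendsto (fun a => s a * u a ^ n) l (𝓝 β)) :
    Tendsto (fun a => s a * u a ^ j) l (𝓝 0) := by
  refine tendsto_zero_of_tendsto_pow (n := n) (by omega) ?_
  have hlim := (hs.pow (n - j)).mul (h.pow j)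
  rw [zero_pow (by omega), zero_mul] at hlim
  -- `(s uʲ)ⁿ = sⁿ⁻ʲ (s uⁿ)ʲ`
  refine hlim.congr fun a => ?_
  rw [mul_pow, mul_pow, ← pow_mul, ← pow_mul, mul_comm j n, ← mul_assoc, ← pow_add,
    Nat.sub_add_cancel hjn.le]

theorem Filter.Tendsto.of_mem_uIcc {a b ξ : α → ℝ} {c : ℝ} (ha : Tendsto a l (𝓝 c))
    (hb : Tendsto b l (𝓝 c)) (hξ : ∀ᶠ s in l, ξ s ∈ uIcc (a s) (b s)) :
    Tendsto ξ l (𝓝 c) := by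
  refine tendsto_of_tendsto_of_tendsto_of_le_of_le' (by simpa using ha.min hb)
    (by simpa using ha.max hb) ?_ ?_
  · exact hξ.mono fun _ h => h.1
  · exact hξ.mono fun _ h => h.2

end

theorem exists_taylor_lagrange_iteratedDeriv {f : ℝ → ℝ} {s : Set ℝ} (hs : IsOpen s) {n : ℕ}
    (hf : ContDiffOn ℝ (n + 1) f s) {a b : ℝ} (hab : uIcc a b ⊆ s) :
    ∃ ξ ∈ uIcc a b, f b = ∑ k ∈ Finset.range (n + 1), iteratedDeriv k f a * (b - a) ^ k / k !
      + iteratedDeriv (n + 1) f ξ * (b - a) ^ (n + 1) / (n + 1)! := by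
  rcases eq_or_ne a b with rfl | hne
  · refine ⟨a, left_mem_uIcc, ?_⟩
    simp [Finset.sum_range_succ']
  obtain ⟨ξ, hξ, h⟩ := taylor_mean_remainder_lagrange_iteratedDeriv hne (hf.mono hab)
  refine ⟨ξ, Ioo_subset_Icc_self hξ, ?_⟩
  have hfa : ContDiffAt ℝ (n + 1) f a := hf.contDiffAt (hs.mem_nhds (hab left_mem_uIcc))
  have hcoeff : ∀ k ∈ Finset.range (n + 1), ((k ! : ℝ)⁻¹ * (b - a) ^ k) •
      iteratedDerivWithin k f (uIcc a b) a = iteratedDeriv k f a * (b - a) ^ k / k ! := by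
    intro k hk
    rw [iteratedDerivWithin_eq_iteratedDeriv (uniqueDiffOn_uIcc hne)
      (hfa.of_le (by exact_mod_cast (Finset.mem_range.mp hk).le)) left_mem_uIcc,
      smul_eq_mul]
    ring
  rw [taylor_within_apply, Finset.sum_congr rfl hcoeff] at h
  linarith

noncomputable def iteratedDerivFst (k : ℕ) (G : ℝ × ℝ → ℝ) (p : ℝ × ℝ) : ℝ :=
  iteratedDeriv k (fun y => G (y, p.2)) p.1

theorem iteratedDerivFst_zero (G : ℝ × ℝ → ℝ) : iteratedDerivFst 0 G = G := by
  ext p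
  simp [iteratedDerivFst]

theorem iteratedDerivFst_one (G : ℝ × ℝ → ℝ) :
    iteratedDerivFst 1 G = fun p => fderiv ℝ (fun y => G (y, p.2)) p.1 1 := by
  ext p
  rw [iteratedDerivFst, iteratedDeriv_one, deriv]

theorem iteratedDerivFst_succ (k : ℕ) (G : ℝ × ℝ → ℝ) :
    iteratedDerivFst (k + 1) G = iteratedDerivFst 1 (iteratedDerivFst k G) := by
  ext p
  simp only [iteratedDerivFst, iteratedDeriv_succ, iteratedDeriv_zero]

section

variable {G : ℝ × ℝ → ℝ} {U : Set (ℝ × ℝ)} {m n : WithTop ℕ∞}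

theorem ContDiffOn.derivFst (hU : IsOpen U) (hG : ContDiffOn ℝ (m + 1) G U) :
    ContDiffOn ℝ m (iteratedDerivFst 1 G) U := by
  intro p hp
  have hGp : ContDiffAt ℝ (m + 1) (fun q : (ℝ × ℝ) × ℝ => G (q.2, q.1.2)) (p, p.1) :=
    (hG.contDiffAt (hU.mem_nhds hp)).comp (p, p.1) (by fun_prop)
  rw [iteratedDerivFst_one]
  exact ((hGp.fderiv (f := fun q y => G (y, q.2)) contDiffAt_fst le_rfl).clm_apply
    contDiffAt_const).contDiffWithinAt

theorem ContDiffOn.iteratedDerivFst (hU : IsOpen U) (hG : ContDiffOn ℝ n G U) {k : ℕ}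
    (hk : m + k ≤ n) : ContDiffOn ℝ m (iteratedDerivFst k G) U := by
  induction k generalizing m with
  | zero =>
    rw [iteratedDerivFst_zero]
    exact hG.of_le (by simpa using hk)
  | succ k ih =>
    rw [iteratedDerivFst_succ]
    exact (ih (m := m + 1) (by rw [add_right_comm, add_assoc]; exact_mod_cast hk)).derivFst hU

end

theorem HasDerivAt.tendsto_slope_zero_mul_right {f : ℝ → ℝ} {f' c : ℝ} (hf : HasDerivAt f f' c)
    (v : ℝ) : Tendsto (fun σ => (f (c + σ * v) - f c) / σ) (𝓝[≠] 0) (𝓝 (f' * v)) := by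
  have hline : HasDerivAt (fun σ : ℝ => c + σ * v) v 0 := by
    simpa using ((hasDerivAt_id (0 : ℝ)).mul_const v).const_add c
  simpa [div_eq_inv_mul, Function.comp_def] using
    (HasDerivAt.comp_of_eq 0 hf hline (by simp)).tendsto_slope_zero

theorem exists_tendsto_deviance_taylor {α : Type*} {l : Filter α} [l.NeBot] {Ω : Set ℝ}
    (hΩ : IsOpen Ω) {d : ℝ → ℝ → ℝ}
    (hC3 : ContDiffOn ℝ 3 (fun p : ℝ × ℝ => d p.1 p.2) (Ω ×ˢ Ω))
    (hdiag : ∀ t ∈ Ω, d t t = 0) (hd1 : ∀ t ∈ Ω, deriv (fun y => d y t) t = 0)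
    {μ₀ : ℝ} (hμ₀ : μ₀ ∈ Ω) {a b : α → ℝ} (ha : Tendsto a l (𝓝 μ₀))
    (hb : Tendsto b l (𝓝 μ₀)) :
    ∃ ξ : α → ℝ, Tendsto ξ l (𝓝 μ₀) ∧ ∀ᶠ i in l, d (b i) (a i) =
      iteratedDeriv 2 (fun y => d y (a i)) (a i) * (b i - a i) ^ 2 / 2
        + iteratedDeriv 3 (fun y => d y (a i)) (ξ i) * (b i - a i) ^ 3 / 6 := by
  obtain ⟨δ, hδ, hball⟩ := Metric.isOpen_iff.mp hΩ μ₀ hμ₀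
  have hsub : ∀ᶠ i in l, uIcc (a i) (b i) ⊆ Ω := by
    filter_upwards [ha (Metric.ball_mem_nhds μ₀ hδ), hb (Metric.ball_mem_nhds μ₀ hδ)]
      with i hai hbi
    have : OrdConnected (Metric.ball μ₀ δ) := by rw [Real.ball_eq_Ioo]; infer_instance
    exact (this.uIcc_subset hai hbi).trans hball
  have hexists : ∀ᶠ i in l, ∃ ξ, ξ ∈ uIcc (a i) (b i) ∧ d (b i) (a i) =
      iteratedDeriv 2 (fun y => d y (a i)) (a i) * (b i - a i) ^ 2 / 2
        + iteratedDeriv 3 (fun y => d y (a i)) ξ * (b i - a i) ^ 3 / 6 := by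
    filter_upwards [hsub] with i hi
    have hai : a i ∈ Ω := hi left_mem_uIcc
    have hslice : ContDiffOn ℝ (2 + 1) (fun y => d y (a i)) Ω :=
      hC3.comp (contDiffOn_id.prodMk contDiffOn_const) fun y hy => ⟨hy, hai⟩
    obtain ⟨ξ, hξ, h⟩ := exists_taylor_lagrange_iteratedDeriv hΩ hslice hi
    refine ⟨ξ, hξ, ?_⟩
    simp [Finset.sum_range_succ, hdiag _ hai, hd1 _ hai] at h
    linarith
  obtain ⟨ξ, hξ⟩ := hexists.choice
  exact ⟨ξ, ha.of_mem_uIcc hb (hξ.mono fun _ h => h.1), hξ.mono fun _ h => h.2⟩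

theorem taylor_limit_third_order_general
    (Ω : Set ℝ) (hΩopen : IsOpen Ω) (μ₀ : ℝ) (hμ₀ : μ₀ ∈ Ω)
    (d : ℝ → ℝ → ℝ)
    (hC3 : ContDiffOn ℝ 3 (fun p : ℝ × ℝ => d p.1 p.2) (Ω ×ˢ Ω))
    (hdiag : ∀ t ∈ Ω, d t t = 0)
    (hd1 : ∀ t ∈ Ω, deriv (fun y => d y t) t = 0)
    (μ : ℝ) (x : ℝ → ℝ)
    (β : ℝ)
    (hx3 : Tendsto (fun σ => σ * (x σ - μ) ^ 3) (𝓝[>] (0 : ℝ)) (𝓝 β)) :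
    Tendsto
      (fun σ =>
        (x σ - μ) ^ 2 / (2 * (2 / iteratedDeriv 2 (fun y => d y μ₀) μ₀))
          - d (μ₀ + σ * x σ) (μ₀ + σ * μ) / (2 * σ ^ 2))
      (𝓝[>] (0 : ℝ))
      (𝓝 (-(β / 12) * iteratedDeriv 3 (fun y => d y μ₀) μ₀)) := by
  set G : ℝ × ℝ → ℝ := fun p => d p.1 p.2
  have hU : IsOpen (Ω ×ˢ Ω) := hΩopen.prod hΩopen
  have hμ₀U : (μ₀, μ₀) ∈ Ω ×ˢ Ω := ⟨hμ₀, hμ₀⟩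
  have hσ : Tendsto (fun σ : ℝ => σ) (𝓝[>] 0) (𝓝 0) := nhdsWithin_le_nhds
  have hσu := tendsto_mul_pow_of_tendsto_mul_pow (j := 1) (by norm_num) hσ hx3
  have hσu2 := tendsto_mul_pow_of_tendsto_mul_pow (j := 2) (by norm_num) hσ hx3
  have ht : Tendsto (fun σ => μ₀ + σ * μ) (𝓝[>] 0) (𝓝 μ₀) := by
    simpa using (hσ.mul_const μ).const_add μ₀
  have hy : Tendsto (fun σ => μ₀ + σ * x σ) (𝓝[>] 0) (𝓝 μ₀) := by
    simpa [mul_sub] using ht.add hσu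
  obtain ⟨ξ, hξ, hd⟩ := exists_tendsto_deviance_taylor hΩopen hC3 hdiag hd1 hμ₀ ht hy
  have hthird : Tendsto (fun σ => iteratedDerivFst 3 G (ξ σ, μ₀ + σ * μ)) (𝓝[>] 0)
      (𝓝 (iteratedDerivFst 3 G (μ₀, μ₀))) :=
    (((hC3.iteratedDerivFst hU (m := 0) (by norm_num)).continuousOn.continuousAt
      (hU.mem_nhds hμ₀U)).tendsto).comp (hξ.prodMk_nhds ht)
  have hcurv : DifferentiableAt ℝ (fun t => iteratedDerivFst 2 G (t, t)) μ₀ :=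
    (((hC3.iteratedDerivFst hU (m := 1) (k := 2) (by norm_num)).contDiffAt
      (hU.mem_nhds hμ₀U)).differentiableAt one_ne_zero).comp (f := fun t : ℝ => (t, t)) μ₀
      (by fun_prop)
  have hslope := (hcurv.hasDerivAt.tendsto_slope_zero_mul_right μ).mono_left (nhdsGT_le_nhdsNE 0)
  have hlim := ((hσu2.mul hslope).neg.div_const 4).sub ((hthird.mul hx3).div_const 12)
  convert hlim.congr' ?_ using 2
  · simp only [G, iteratedDerivFst]
    ring
  filter_upwards [hd, self_mem_nhdsWithin] with σ hdσ (hσpos : 0 < σ)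
  rw [hdσ]
  simp only [G, iteratedDerivFst]
  field_simp
  ring

/-- Exponent comparison underlying Theorem 2: for a C³ unit
deviance with `d(t,t)=0`, `∂_y d(t;t)=0`, `∂²_{yy} d(t;t) > 0`, with
`V(t) = 2/∂²_{yy} d(t;t)` continuous at `μ₀`, if `σ(x(σ)−μ)³ → β ∈ [0,∞)` and
`σ²(x(σ)−μ)⁴ → 0` as `σ → 0⁺`, then
`(x(σ)−μ)²/(2V(μ₀)) − (2σ²)⁻¹ d(μ₀+σx(σ); μ₀+σμ) → −(β/12)·∂³_{yyy} d(μ₀;μ₀)`. -/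
theorem taylor_limit_third_order
    (Ω : Set ℝ) (hΩopen : IsOpen Ω) (μ₀ : ℝ) (hμ₀ : μ₀ ∈ Ω)
    (d : ℝ → ℝ → ℝ)
    (hC3 : ContDiffOn ℝ 3 (fun p : ℝ × ℝ => d p.1 p.2) (Ω ×ˢ Ω))
    (hdiag : ∀ t ∈ Ω, d t t = 0)
    (hd1 : ∀ t ∈ Ω, deriv (fun y => d y t) t = 0)
    (hd2pos : ∀ t ∈ Ω, 0 < iteratedDeriv 2 (fun y => d y t) t)
    (hVcont : ContinuousAt (fun t => 2 / iteratedDeriv 2 (fun y => d y t) t) μ₀)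
    (μ : ℝ) (x : ℝ → ℝ)
    (hmem : ∀ᶠ σ in 𝓝[>] (0 : ℝ),
      μ₀ + σ * μ ∈ Ω ∧ μ₀ + σ * x σ ∈ Ω)
    (β : ℝ) (hβ : 0 ≤ β)
    (hx3 : Tendsto (fun σ => σ * (x σ - μ) ^ 3) (𝓝[>] (0 : ℝ)) (𝓝 β))
    (hx4 : Tendsto (fun σ => σ ^ 2 * (x σ - μ) ^ 4) (𝓝[>] (0 : ℝ)) (𝓝 0)) :
    Tendsto
      (fun σ =>
        (x σ - μ) ^ 2 / (2 * (2 / iteratedDeriv 2 (fun y => d y μ₀) μ₀))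
          - d (μ₀ + σ * x σ) (μ₀ + σ * μ) / (2 * σ ^ 2))
      (𝓝[>] (0 : ℝ))
      (𝓝 (-(β / 12) * iteratedDeriv 3 (fun y => d y μ₀) μ₀)) :=
  taylor_limit_third_order_general Ω hΩopen μ₀ hμ₀ d hC3 hdiag hd1 μ x β hx3
end
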